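/- arXiv:1904.12371 — 3 statements merged into one kernel-verified Lean document; each statement's English description precedes it below -/
import Mathlib

section
/- If a sub-MC of a finite Markov chain D refutes a safety property, then D refutes it too: let P be the transition function of a finite MC over finite nonempty state type S with initial state s0, let G ⊆ S, λ ∈ ℝ, and let C ⊆ S with s0 ∈ C. If Prob_{P_C}(s0,G) > λ (i.e., the sub-MC with critical states C violates the safety property P_{≤λ}(◇G)), then Prob_P(s0,G) > λ (i.e., D violates P_{≤λ}(◇G)). -/
open scoped Classical BigOperators

/-- `n`-step reachability probability `Pr_P^n(s, G)`. -/
noncomputable def Pr {S : Type*} [Fintype S] (P : S → S → ℝ) : ℕ → S → Set S → ℝ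
  | 0, s, G => if s ∈ G then 1 else 0
  | n + 1, s, G => if s ∈ G then 1 else ∑ t, P s t * Pr P n t G

/-- Reachability probability `Prob_P(s, G) = ⨆ n, Pr_P^n(s, G)`. -/
noncomputable def Prob {S : Type*} [Fintype S] (P : S → S → ℝ) (s : S) (G : Set S) : ℝ :=
  ⨆ n : ℕ, Pr P n s G

/-- `C`-restriction of `P`: states outside `C` are made absorbing. -/
noncomputable def restrictMC {S : Type*} (C : Set S) (P : S → S → ℝ) (s t : S) : ℝ :=
  if s ∈ C then P s t else (if t = s then 1 else 0)

/-- `n`-step probability of reaching `B` while avoiding `G`. -/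
noncomputable def APr {S : Type*} [Fintype S] (P : S → S → ℝ) : ℕ → S → Set S → Set S → ℝ
  | 0, s, B, _ => if s ∈ B then 1 else 0
  | n + 1, s, B, G => if s ∈ B then 1 else if s ∈ G then 0 else ∑ t, P s t * APr P n t B G

/-- `AProb_P(s, B, G) = ⨆ n, APr_P^n(s, B, G)`. -/
noncomputable def AProb {S : Type*} [Fintype S] (P : S → S → ℝ) (s : S) (B G : Set S) : ℝ :=
  ⨆ n : ℕ, APr P n s B G

/-- `s` has a path to `G` under `P`. -/
def HasPathTo {S : Type*} (P : S → S → ℝ) (s : S) (G : Set S) : Prop :=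
  ∃ (m : ℕ) (u : ℕ → S), u 0 = s ∧ (∀ i < m, 0 < P (u i) (u (i + 1))) ∧ u m ∈ G

/-- `B_P(G)`: the set of states with no path to `G` under `P`. -/
def BSet {S : Type*} (P : S → S → ℝ) (G : Set S) : Set S :=
  {s | ¬ HasPathTo P s G}

/-- Transition function `P_r` of the instantiated MC `D_r` of a family `𝔓`. -/
noncomputable def Pinst {S K : Type*} [Fintype K] (𝔓 : S → K → ℝ) (r : K → S) (s t : S) : ℝ :=
  ∑ k, if r k = t then 𝔓 s k else 0

/-- Parameter `k` occurs at some state of `C`. -/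
def OccursIn {S K : Type*} (𝔓 : S → K → ℝ) (C : Set S) (k : K) : Prop :=
  ∃ s ∈ C, 0 < 𝔓 s k

/-- `u` is reachable from `s0` under `P`. -/
def ReachableFrom {S : Type*} (P : S → S → ℝ) (s0 u : S) : Prop :=
  ∃ (m : ℕ) (v : ℕ → S), v 0 = s0 ∧ (∀ i < m, 0 < P (v i) (v (i + 1))) ∧ v m = u

section

variable {S : Type*} [Fintype S] {P : S → S → ℝ} {G : Set S}

lemma Pr_nonneg (hP0 : ∀ s t, 0 ≤ P s t) (n : ℕ) (s : S) : 0 ≤ Pr P n s G := by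
  induction n generalizing s with
  | zero => unfold Pr; split_ifs <;> norm_num
  | succ n ih =>
    unfold Pr
    split_ifs
    · exact zero_le_one
    · exact Finset.sum_nonneg fun t _ => mul_nonneg (hP0 s t) (ih t)

lemma Pr_le_one (hP0 : ∀ s t, 0 ≤ P s t) (hP1 : ∀ s, ∑ t, P s t = 1) (n : ℕ) (s : S) :
    Pr P n s G ≤ 1 := by
  induction n generalizing s with
  | zero => unfold Pr; split_ifs <;> norm_num
  | succ n ih =>
    unfold Pr
    split_ifs
    · exact le_rfl
    · calc ∑ t, P s t * Pr P n t G ≤ ∑ t, P s t * 1 :=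
            Finset.sum_le_sum fun t _ => mul_le_mul_of_nonneg_left (ih t) (hP0 s t)
        _ = 1 := by simp only [mul_one, hP1 s]

lemma Pr_of_mem {s : S} (hs : s ∈ G) (n : ℕ) : Pr P n s G = 1 := by
  cases n <;> simp [Pr, hs]

lemma Pr_of_absorbing {s : S} (hs : ∀ t, P s t = if t = s then 1 else 0) (n : ℕ) :
    Pr P n s G = Pr P 0 s G := by
  induction n with
  | zero => rfl
  | succ n ih =>
    by_cases hsG : s ∈ G
    · simp [Pr, hsG]
    · simp [Pr, hsG, hs, ih]

lemma Pr_restrictMC_le (hP0 : ∀ s t, 0 ≤ P s t) (C : Set S) (n : ℕ) (s : S) :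
    Pr (restrictMC C P) n s G ≤ Pr P n s G := by
  induction n generalizing s with
  | zero => rfl
  | succ n ih =>
    by_cases hsG : s ∈ G
    · rw [Pr_of_mem hsG, Pr_of_mem hsG]
    by_cases hsC : s ∈ C
    · simp only [Pr, if_neg hsG, restrictMC, if_pos hsC]
      exact Finset.sum_le_sum fun t _ => mul_le_mul_of_nonneg_left (ih t) (hP0 s t)
    · have habsorbing : ∀ t, restrictMC C P s t = if t = s then 1 else 0 := fun t =>
        if_neg hsC
      rw [Pr_of_absorbing habsorbing, Pr, if_neg hsG]
      exact Pr_nonneg hP0 _ s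

lemma Prob_restrictMC_le (hP0 : ∀ s t, 0 ≤ P s t) (hP1 : ∀ s, ∑ t, P s t = 1) (C : Set S)
    (s : S) : Prob (restrictMC C P) s G ≤ Prob P s G := by
  have hbdd : BddAbove (Set.range fun n => Pr P n s G) :=
    ⟨1, by rintro _ ⟨n, rfl⟩; exact Pr_le_one hP0 hP1 n s⟩
  exact ciSup_le fun n => (Pr_restrictMC_le hP0 C n s).trans (le_ciSup hbdd n)

end

theorem stmt_2_general {S : Type*} [Fintype S] (P : S → S → ℝ)
    (hP0 : ∀ s t, 0 ≤ P s t) (hP1 : ∀ s, ∑ t, P s t = 1)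
    (s0 : S) (G : Set S) (lam : ℝ) (C : Set S)
    (hviol : Prob (restrictMC C P) s0 G > lam) :
    Prob P s0 G > lam := by
  exact hviol.trans_le (Prob_restrictMC_le hP0 hP1 C s0)

/-- if a sub-MC refutes a safety property, the MC refutes it too. -/
theorem stmt_2 {S : Type*} [Fintype S] [Nonempty S] (P : S → S → ℝ)
    (hP0 : ∀ s t, 0 ≤ P s t) (hP1 : ∀ s, ∑ t, P s t = 1)
    (s0 : S) (G : Set S) (lam : ℝ) (C : Set S) (hs0 : s0 ∈ C)
    (hviol : Prob (restrictMC C P) s0 G > lam) :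
    Prob P s0 G > lam :=
  stmt_2_general P hP0 hP1 s0 G lam C hviol
end

section
/- Restriction monotonicity for avoid-constrained reachability: let P be the transition function of a finite MC over finite nonempty state type S, let C ⊆ S, and let P_C be the C-restriction of P. Then for all B, G ⊆ S, every state s, and every n : ℕ, APr_{P_C}^n(s, B, G) ≤ APr_P^n(s, B, G); consequently AProb_{P_C}(s,B,G) ≤ AProb_P(s,B,G). -/
open scoped Classical BigOperators

section APr

variable {S : Type*} [Fintype S] {P : S → S → ℝ} {B G : Set S}

theorem apr_succ_of_notMem {n : ℕ} {s : S} (hB : s ∉ B) (hG : s ∉ G) :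
    APr P (n + 1) s B G = ∑ t, P s t * APr P n t B G := by
  rw [APr, if_neg hB, if_neg hG]

theorem apr_nonneg (hP0 : ∀ s t, 0 ≤ P s t) (n : ℕ) (s : S) : 0 ≤ APr P n s B G := by
  induction n generalizing s with
  | zero => rw [APr]; split_ifs <;> norm_num
  | succ n ih =>
    rw [APr]
    split_ifs
    · exact zero_le_one
    · exact le_rfl
    · exact Finset.sum_nonneg fun t _ => mul_nonneg (hP0 s t) (ih t)

theorem apr_le_one (hP0 : ∀ s t, 0 ≤ P s t) (hP1 : ∀ s, ∑ t, P s t ≤ 1) (n : ℕ) (s : S) :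
    APr P n s B G ≤ 1 := by
  induction n generalizing s with
  | zero => rw [APr]; split_ifs <;> norm_num
  | succ n ih =>
    rw [APr]
    split_ifs
    · exact le_rfl
    · exact zero_le_one
    · calc ∑ t, P s t * APr P n t B G ≤ ∑ t, P s t :=
            Finset.sum_le_sum fun t _ => mul_le_of_le_one_right (hP0 s t) (ih t)
        _ ≤ 1 := hP1 s

theorem apr_le_apr_succ (hP0 : ∀ s t, 0 ≤ P s t) (n : ℕ) (s : S) :
    APr P n s B G ≤ APr P (n + 1) s B G := by
  induction n generalizing s with
  | zero =>
    rw [APr, APr]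
    split_ifs
    · exact le_rfl
    · exact le_rfl
    · exact Finset.sum_nonneg fun t _ => mul_nonneg (hP0 s t) (apr_nonneg hP0 0 t)
  | succ n ih =>
    by_cases hB : s ∈ B
    · simp only [APr, if_pos hB, le_rfl]
    by_cases hG : s ∈ G
    · simp only [APr, if_neg hB, if_pos hG, le_rfl]
    rw [apr_succ_of_notMem hB hG, apr_succ_of_notMem hB hG]
    exact Finset.sum_le_sum fun t _ => mul_le_mul_of_nonneg_left (ih t) (hP0 s t)

end APr

section restrictMC

variable {S : Type*} {C : Set S} {P : S → S → ℝ}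

theorem restrictMC_of_mem {s : S} (hs : s ∈ C) (t : S) : restrictMC C P s t = P s t :=
  if_pos hs

theorem sum_restrictMC_mul_of_notMem [Fintype S] {s : S} (hs : s ∉ C) (f : S → ℝ) :
    ∑ t, restrictMC C P s t * f t = f s := by
  rw [Fintype.sum_eq_single s fun t ht => by simp [restrictMC, hs, ht]]
  simp [restrictMC, hs]

theorem apr_restrictMC_le [Fintype S] (hP0 : ∀ s t, 0 ≤ P s t) (B G : Set S) (n : ℕ) (s : S) :
    APr (restrictMC C P) n s B G ≤ APr P n s B G := by
  induction n generalizing s with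
  | zero => exact le_rfl
  | succ n ih =>
    by_cases hB : s ∈ B
    · simp only [APr, if_pos hB, le_rfl]
    by_cases hG : s ∈ G
    · simp only [APr, if_neg hB, if_pos hG, le_rfl]
    rw [apr_succ_of_notMem hB hG]
    by_cases hC : s ∈ C
    · rw [apr_succ_of_notMem hB hG]
      simp only [restrictMC_of_mem hC]
      exact Finset.sum_le_sum fun t _ => mul_le_mul_of_nonneg_left (ih t) (hP0 s t)
    · -- `s` is absorbing in the restriction, so its value only catches up one step later.
      rw [sum_restrictMC_mul_of_notMem hC]
      exact (ih s).trans (apr_le_apr_succ hP0 n s)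

end restrictMC

theorem aprob_mono_of_apr_le {S : Type*} [Fintype S] {P Q : S → S → ℝ} (hP0 : ∀ s t, 0 ≤ P s t)
    (hP1 : ∀ s, ∑ t, P s t ≤ 1) {s : S} {B G : Set S}
    (h : ∀ n, APr Q n s B G ≤ APr P n s B G) : AProb Q s B G ≤ AProb P s B G :=
  ciSup_le fun n => (h n).trans <|
    le_ciSup ⟨1, Set.forall_mem_range.2 fun m => apr_le_one hP0 hP1 m s⟩ n

theorem stmt_13_general {S : Type*} [Fintype S] (P : S → S → ℝ)
    (hP0 : ∀ s t, 0 ≤ P s t) (hP1 : ∀ s, ∑ t, P s t = 1)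
    (C : Set S) (B G : Set S) (s : S) (n : ℕ) :
    APr (restrictMC C P) n s B G ≤ APr P n s B G ∧
    AProb (restrictMC C P) s B G ≤ AProb P s B G :=
  ⟨apr_restrictMC_le hP0 B G n s,
    aprob_mono_of_apr_le hP0 (fun s => (hP1 s).le) fun m => apr_restrictMC_le hP0 B G m s⟩

/-- restriction monotonicity for avoid-constrained reachability. -/
theorem stmt_13 {S : Type*} [Fintype S] [Nonempty S] (P : S → S → ℝ)
    (hP0 : ∀ s t, 0 ≤ P s t) (hP1 : ∀ s, ∑ t, P s t = 1)
    (C : Set S) (B G : Set S) (s : S) (n : ℕ) :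
    APr (restrictMC C P) n s B G ≤ APr P n s B G ∧
    AProb (restrictMC C P) s B G ≤ AProb P s B G :=
  stmt_13_general P hP0 hP1 C B G s n
end

section
/- Preservation of no-path states across realisations: let 𝔓 be a family of MCs over finite state type S with parameter type K, let G ⊆ S, let r : K → S be a realisation, and let B = B_{P_r}(G) be the set of states with no path to G under P_r. If r' : K → S is a realisation with r' k = r k for every parameter k that occurs at some state of B, then no state of B has a path to G under P_{r'}, i.e., B ⊆ B_{P_{r'}}(G). -/
open scoped Classical BigOperators

/-! A positive `P_{r'}`-step out of a state `s` of `B` is carried by a parameter occurring at `s`,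
which `r'` sends where `r` does; so it is also a positive `P_r`-step and cannot leave `B`.
Hence `B` is closed under `P_{r'}` and, being disjoint from `G`, has no `P_{r'}`-path to `G`. -/

section Paths

variable {S : Type*} (P : S → S → ℝ)

lemma mem_of_path_of_closed {C : Set S} (hC : ∀ s ∈ C, ∀ t, 0 < P s t → t ∈ C)
    {m : ℕ} {u : ℕ → S} (hu0 : u 0 ∈ C) (hu : ∀ i < m, 0 < P (u i) (u (i + 1))) : u m ∈ C := by
  induction m with
  | zero => exact hu0
  | succ m ih => exact hC _ (ih fun i hi => hu i (by omega)) _ (hu m (by omega))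

lemma subset_bSet_of_closed {C G : Set S} (hC : ∀ s ∈ C, ∀ t, 0 < P s t → t ∈ C)
    (hCG : Disjoint C G) : C ⊆ BSet P G := by
  rintro s hs ⟨m, u, rfl, hu, hum⟩
  exact hCG.ne_of_mem (mem_of_path_of_closed P hC hs hu) hum rfl

lemma HasPathTo.of_pos {s t : S} {G : Set S} (hst : 0 < P s t) (h : HasPathTo P t G) :
    HasPathTo P s G := by
  obtain ⟨m, v, rfl, hv, hvm⟩ := h
  refine ⟨m + 1, fun j => if j = 0 then s else v (j - 1), rfl, ?_, by simpa using hvm⟩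
  rintro (_ | i) hi
  · simpa using hst
  · simpa using hv i (by omega)

lemma mem_bSet_of_pos {G : Set S} {s t : S} (hs : s ∈ BSet P G) (hst : 0 < P s t) :
    t ∈ BSet P G :=
  fun h => hs (h.of_pos P hst)

lemma disjoint_bSet (G : Set S) : Disjoint (BSet P G) G :=
  Set.disjoint_left.mpr fun s hs hsG => hs ⟨0, fun _ => s, rfl, by simp, hsG⟩

end Paths

lemma pinst_pos_iff {S K : Type*} [Fintype K] {𝔓 : S → K → ℝ} (h𝔓0 : ∀ s k, 0 ≤ 𝔓 s k)
    (r : K → S) (s t : S) : 0 < Pinst 𝔓 r s t ↔ ∃ k, r k = t ∧ 0 < 𝔓 s k := by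
  have hnonneg : ∀ k ∈ Finset.univ, 0 ≤ if r k = t then 𝔓 s k else 0 := fun k _ => by
    split_ifs
    exacts [h𝔓0 s k, le_rfl]
  simp only [Pinst, Finset.sum_pos_iff_of_nonneg hnonneg, Finset.mem_univ, true_and]
  refine exists_congr fun k => ?_
  split_ifs with h <;> simp [h]

theorem stmt_15_general {S K : Type*} [Fintype K]
    (𝔓 : S → K → ℝ) (h𝔓0 : ∀ s k, 0 ≤ 𝔓 s k)
    (G : Set S) (r : K → S) (r' : K → S)
    (hagree : ∀ k, OccursIn 𝔓 (BSet (Pinst 𝔓 r) G) k → r' k = r k) :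
    BSet (Pinst 𝔓 r) G ⊆ BSet (Pinst 𝔓 r') G := by
  refine subset_bSet_of_closed _ (fun s hs t hst => ?_) (disjoint_bSet _ G)
  obtain ⟨k, rfl, hk⟩ := (pinst_pos_iff h𝔓0 r' s t).mp hst
  rw [hagree k ⟨s, hs, hk⟩]
  exact mem_bSet_of_pos _ hs ((pinst_pos_iff h𝔓0 r s _).mpr ⟨k, rfl, hk⟩)

/-- preservation of no-path states across realisations. -/
theorem stmt_15 {S K : Type*} [Fintype S] [Nonempty S] [Fintype K]
    (𝔓 : S → K → ℝ) (h𝔓0 : ∀ s k, 0 ≤ 𝔓 s k) (h𝔓1 : ∀ s, ∑ k, 𝔓 s k = 1)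
    (G : Set S) (r : K → S) (r' : K → S)
    (hagree : ∀ k, OccursIn 𝔓 (BSet (Pinst 𝔓 r) G) k → r' k = r k) :
    BSet (Pinst 𝔓 r) G ⊆ BSet (Pinst 𝔓 r') G :=
  stmt_15_general 𝔓 h𝔓0 G r r' hagree
end
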